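/- arXiv:math/0201160 — 6 statements merged into one kernel-verified Lean document; each statement's English description precedes it below -/
import Mathlib

section
/- Let G be a graph with two non-adjacent vertices v and w such that the neighborhood of v is contained in the neighborhood of w. Then f(G) = f(G - w). -/
open Finset

/- `f(G) = Σ_C (-1)^{|C|}` over all independent vertex sets `C` of `G`. -/
open Classical in
noncomputable def fgraph {V : Type*} [Fintype V] (G : SimpleGraph V) : ℤ :=
  ∑ s ∈ Finset.univ.filter (fun s : Finset V => ∀ u ∈ s, ∀ v ∈ s, ¬ G.Adj u v),
    (-1 : ℤ) ^ s.card

/- `f` of the induced subgraph of `G` on the vertex set `A`. -/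
open Classical in
noncomputable def fdel {V : Type*} [Fintype V] (G : SimpleGraph V) (A : Set V) : ℤ :=
  fgraph (G.induce A)

/-!
Toggling `v` is a sign-reversing involution on the independent sets of `G` that contain `w`:
removing `v` keeps a set independent, and adding `v` does too, since every neighbour of `v` is a
neighbour of `w`, which is already in the set. So those sets contribute nothing to `f(G)`, and the
independent sets avoiding `w` are exactly the independent sets of `G - w`.
-/

namespace SimpleGraph

variable {V : Type*} {G : SimpleGraph V}

theorem isIndepSet_coe_iff {s : Finset V} :
    G.IsIndepSet (s : Set V) ↔ ∀ u ∈ s, ∀ x ∈ s, ¬ G.Adj u x := by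
  refine ⟨fun hs u hu x hx hux => ?_, fun hs u hu x hx _ => hs u hu x hx⟩
  exact hs hu hx hux.ne hux

theorem IsIndepSet.insert_of_neighborSet_subset {s : Set V} {v w : V} (hs : G.IsIndepSet s)
    (hw : w ∈ s) (hsub : G.neighborSet v ⊆ G.neighborSet w) : G.IsIndepSet (insert v s) := by
  have hv : ∀ u ∈ s, ¬ G.Adj v u := fun u hu hvu => hs hw hu (hsub hvu).ne (hsub hvu)
  exact hs.insert fun u hu _ => ⟨hv u hu, fun huv => hv u hu huv.symm⟩

end SimpleGraph

section

open SimpleGraph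

variable {V : Type*} [Fintype V]

open Classical in
theorem fgraph_eq_sum_isIndepSet (G : SimpleGraph V) :
    fgraph G = ∑ s ∈ univ.filter (fun s : Finset V => G.IsIndepSet ↑s), (-1 : ℤ) ^ #s := by
  simp only [fgraph, isIndepSet_coe_iff]

open Classical in
theorem sum_isIndepSet_mem_eq_zero {G : SimpleGraph V} {v w : V} (hne : v ≠ w)
    (hsub : G.neighborSet v ⊆ G.neighborSet w) :
    ∑ s ∈ univ.filter (fun s : Finset V => G.IsIndepSet ↑s ∧ w ∈ s), (-1 : ℤ) ^ #s = 0 := by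
  refine sum_involution (fun s _ => if v ∈ s then s.erase v else insert v s) ?_ ?_ ?_ ?_
  · intro s _
    split_ifs with hv
    · rw [← card_erase_add_one hv, pow_succ]; ring
    · rw [card_insert_of_notMem hv, pow_succ]; ring
  · intro s _ _
    split_ifs with hv
    · exact fun h => notMem_erase v s (h.symm ▸ hv)
    · exact fun h => hv (h ▸ mem_insert_self v s)
  · intro s hs
    simp only [mem_filter, mem_univ, true_and] at hs ⊢
    obtain ⟨hind, hw⟩ := hs
    split_ifs with hv
    · exact ⟨hind.mono (coe_erase v s ▸ Set.sdiff_subset), mem_erase.2 ⟨hne.symm, hw⟩⟩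
    · exact ⟨coe_insert v s ▸ hind.insert_of_neighborSet_subset hw hsub, mem_insert_of_mem hw⟩
  · intro s _
    by_cases hv : v ∈ s <;> simp [hv, insert_erase]

open Classical in
theorem fgraph_induce (G : SimpleGraph V) (A : Set V) :
    fgraph (G.induce A) =
      ∑ s ∈ univ.filter (fun s : Finset V => G.IsIndepSet ↑s ∧ ↑s ⊆ A), (-1 : ℤ) ^ #s := by
  rw [fgraph_eq_sum_isIndepSet]
  refine sum_nbij' (fun t => t.map (Function.Embedding.subtype _)) (fun s => s.subtype (· ∈ A))
    ?_ ?_ ?_ ?_ ?_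
  · intro t ht
    simp only [mem_filter, mem_univ, true_and, isIndepSet_coe_iff] at ht ⊢
    refine ⟨?_, map_subtype_subset t⟩
    simpa using ht
  · intro s hs
    simp only [mem_filter, mem_univ, true_and, isIndepSet_coe_iff] at hs ⊢
    exact fun u hu x hx => hs.1 u (mem_subtype.1 hu) x (mem_subtype.1 hx)
  · intro t _
    ext x
    simp
  · intro s hs
    simp only [mem_filter, mem_univ, true_and] at hs
    exact subtype_map_of_mem hs.2
  · intro t _
    simp

end

theorem law_of_duplication_general {V : Type*} [Fintype V] (G : SimpleGraph V) (v w : V)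
    (hne : v ≠ w) (hsub : ∀ u, G.Adj v u → G.Adj w u) :
    fgraph G = fdel G {u | u ≠ w} := by
  classical
  rw [fgraph_eq_sum_isIndepSet, fdel, fgraph_induce,
    ← sum_filter_add_sum_filter_not _ (w ∈ ·), filter_filter,
    sum_isIndepSet_mem_eq_zero hne hsub, zero_add, filter_filter]
  simp [Set.subset_def]

/-- Law of duplication: if `v ≠ w` are non-adjacent and `N(v) ⊆ N(w)` then
`f(G) = f(G - w)`. -/
theorem law_of_duplication {V : Type*} [Fintype V] (G : SimpleGraph V) (v w : V)
    (hne : v ≠ w) (hnadj : ¬ G.Adj v w) (hsub : ∀ u, G.Adj v u → G.Adj w u) :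
    fgraph G = fdel G {u | u ≠ w} :=
  law_of_duplication_general G v w hne hsub
end

section
/- For the path graph L_n on n vertices (n ≥ 4), f(L_n) = -f(L_{n-3}). -/
/-!
Splitting the independent sets of `G` according to whether they contain a vertex `v` gives
`f(G) = f(G - v) - f(G - N[v])`: those containing `v` are `insert v` of the independent sets
avoiding the closed neighbourhood `N[v]`, with one more element and hence the opposite sign.
For an end vertex of a path both `G - v` and `G - N[v]` are again paths, so
`f(L_{n+2}) = f(L_{n+1}) - f(L_n)`, and applying this twice gives `f(L_{n+3}) = -f(L_n)`.
-/

open Finset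

section

open Classical SimpleGraph

variable {V W : Type*} [Fintype V] [Fintype W] (G : SimpleGraph V)

theorem fgraph_comap_eq_sum_indep (f : W ↪ V) :
    fgraph (G.comap f) = ∑ s ∈ univ.filter (fun s : Finset V =>
      (∀ u ∈ s, ∀ v ∈ s, ¬ G.Adj u v) ∧ ↑s ⊆ Set.range f), (-1 : ℤ) ^ s.card := by
  unfold fgraph
  refine sum_nbij (·.map f) ?_ (Finset.map_injective f).injOn ?_ fun t _ => by rw [card_map]
  · intro t ht
    simp only [mem_filter, mem_univ, true_and, mem_map, coe_map] at ht ⊢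
    refine ⟨?_, Set.image_subset_range _ _⟩
    rintro _ ⟨a, ha, rfl⟩ _ ⟨b, hb, rfl⟩
    exact ht a ha b hb
  · intro s hs
    simp only [coe_filter, mem_univ, true_and, Set.mem_ofPred_eq] at hs ⊢
    obtain ⟨hs, hsf⟩ := hs
    obtain ⟨t, -, rfl⟩ := subset_map_iff.mp (show s ⊆ univ.map f from fun x hx => by
      obtain ⟨a, rfl⟩ := hsf hx
      exact mem_map_of_mem f (mem_univ a))
    exact ⟨t, fun a ha b hb => hs _ (mem_map_of_mem f ha) _ (mem_map_of_mem f hb), rfl⟩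

theorem fdel_eq_sum_indep (A : Set V) :
    fdel G A = ∑ s ∈ univ.filter (fun s : Finset V =>
      (∀ u ∈ s, ∀ v ∈ s, ¬ G.Adj u v) ∧ ↑s ⊆ A), (-1 : ℤ) ^ s.card := by
  rw [fdel, induce, fgraph_comap_eq_sum_indep, Function.Embedding.coe_subtype, Subtype.range_coe]

theorem fdel_range (f : W ↪ V) : fdel G (Set.range f) = fgraph (G.comap f) := by
  rw [fdel_eq_sum_indep, fgraph_comap_eq_sum_indep]

theorem sum_indep_mem_eq_neg (v : V) :
    ∑ s ∈ univ.filter (fun s : Finset V => (∀ u ∈ s, ∀ w ∈ s, ¬ G.Adj u w) ∧ v ∈ s),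
      (-1 : ℤ) ^ s.card
    = -∑ s ∈ univ.filter (fun s : Finset V =>
      (∀ u ∈ s, ∀ w ∈ s, ¬ G.Adj u w) ∧ ↑s ⊆ (insert v (G.neighborSet v))ᶜ), (-1 : ℤ) ^ s.card := by
  rw [← sum_neg_distrib]
  symm
  have avoid {t : Finset V} (ht : ↑t ⊆ (insert v (G.neighborSet v))ᶜ) :
      ∀ x ∈ t, x ≠ v ∧ ¬ G.Adj v x := fun x hx => by
    simpa [not_or] using ht hx
  refine sum_nbij' (insert v) (·.erase v) ?_ ?_ ?_ ?_ ?_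
  · intro t ht
    simp only [mem_filter, mem_univ, true_and] at ht ⊢
    obtain ⟨hind, hav⟩ := ht
    refine ⟨?_, mem_insert_self v t⟩
    intro u hu w hw
    rw [mem_insert] at hu hw
    rcases hu with rfl | hu <;> rcases hw with rfl | hw
    exacts [G.irrefl, (avoid hav w hw).2, fun h => (avoid hav u hu).2 h.symm, hind u hu w hw]
  · intro s hs
    simp only [mem_filter, mem_univ, true_and] at hs ⊢
    obtain ⟨hind, hv⟩ := hs
    refine ⟨fun u hu w hw => hind u (mem_of_mem_erase hu) w (mem_of_mem_erase hw), ?_⟩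
    intro x hx
    simp only [coe_erase, Set.mem_sdiff, mem_coe, Set.mem_singleton_iff] at hx
    simpa [not_or, hx.2] using hind v hv x hx.1
  · intro t ht
    simp only [mem_filter, mem_univ, true_and] at ht
    exact erase_insert fun hv => (avoid ht.2 v hv).1 rfl
  · intro s hs
    simp only [mem_filter, mem_univ, true_and] at hs
    exact insert_erase hs.2
  · intro t ht
    simp only [mem_filter, mem_univ, true_and] at ht
    rw [card_insert_of_notMem fun hv => (avoid ht.2 v hv).1 rfl, pow_succ]
    ring

theorem fgraph_eq_fdel_sub_fdel (v : V) :
    fgraph G = fdel G {v}ᶜ - fdel G (insert v (G.neighborSet v))ᶜ := by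
  rw [fdel_eq_sum_indep, fdel_eq_sum_indep, sub_eq_add_neg, ← sum_indep_mem_eq_neg, fgraph,
    ← sum_filter_add_sum_filter_not _ (v ∉ ·), filter_filter, filter_filter]
  simp only [Set.subset_compl_singleton_iff, mem_coe, not_not]

theorem SimpleGraph.pathGraph_comap_castLE {n m : ℕ} (h : n ≤ m) :
    (pathGraph m).comap (Fin.castLEEmb h) = pathGraph n := by
  ext u v
  simp [pathGraph_adj]

theorem fgraph_pathGraph_add_two (n : ℕ) :
    fgraph (pathGraph (n + 2)) = fgraph (pathGraph (n + 1)) - fgraph (pathGraph n) := by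
  have last_compl : ({Fin.last (n + 1)}ᶜ : Set (Fin (n + 2)))
      = Set.range (Fin.castLEEmb (Nat.le_succ (n + 1))) := by
    rw [Fin.coe_castLEEmb, Fin.range_castLE]
    ext x
    simp only [Set.mem_compl_iff, Set.mem_singleton_iff, Fin.ext_iff, Fin.val_last,
      Set.mem_ofPred_eq]
    omega
  have closedNbhd_compl :
      (insert (Fin.last (n + 1)) ((pathGraph (n + 2)).neighborSet (Fin.last (n + 1))))ᶜ
      = Set.range (Fin.castLEEmb (Nat.le_add_right n 2)) := by
    rw [Fin.coe_castLEEmb, Fin.range_castLE]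
    ext x
    simp only [Set.mem_compl_iff, Set.mem_insert_iff, Fin.ext_iff, Fin.val_last,
      mem_neighborSet, pathGraph_adj, Set.mem_ofPred_eq]
    omega
  rw [fgraph_eq_fdel_sub_fdel _ (Fin.last (n + 1)), last_compl, closedNbhd_compl, fdel_range,
    fdel_range, pathGraph_comap_castLE, pathGraph_comap_castLE]

end

/-- For the path graph `L_n` with `n ≥ 4`, `f(L_n) = -f(L_{n-3})`. -/
theorem path_recursion (n : ℕ) (hn : 4 ≤ n) :
    fgraph (SimpleGraph.pathGraph n) = - fgraph (SimpleGraph.pathGraph (n - 3)) := by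
  obtain ⟨m, rfl⟩ := Nat.exists_eq_add_of_le' hn
  rw [show m + 4 - 3 = m + 1 by omega, fgraph_pathGraph_add_two (m + 2),
    fgraph_pathGraph_add_two (m + 1)]
  ring
end

section
/- Let G be a graph with a vertex v such that f(G) = n and f(G - v) = k. Let H be a 6-cycle with vertices w and v' adjacent in H. Form G' from the disjoint union of G and H by adding an edge joining v and w. Then f(G') = n + k and f(G' - v') = k. -/
open Finset

/-- The graph obtained from the disjoint union of `G` and `H` by adding an
extra edge joining `v ∈ G` and `w ∈ H`. -/
def glue {V W : Type*} (G : SimpleGraph V) (H : SimpleGraph W) (v : V) (w : W) :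
    SimpleGraph (V ⊕ W) :=
  (G ⊕g H) ⊔ SimpleGraph.fromEdgeSet ({s(Sum.inl v, Sum.inr w)} : Set (Sym2 (V ⊕ W)))

/-! ### Auxiliary machinery -/

lemma ite_prop_congr {p q : Prop} {hp : Decidable p} {hq : Decidable q} (h : p ↔ q) (x y : ℤ) :
    @ite ℤ p hp x y = @ite ℤ q hq x y := by
  by_cases hc : p
  · rw [if_pos hc, if_pos (h.mp hc)]
  · rw [if_neg hc, if_neg (fun hc' => hc (h.mpr hc'))]

section Infra

variable {V : Type*} [Fintype V]

open Classical in
lemma fgraph_eq_sum_ite (G : SimpleGraph V) :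
    fgraph G = ∑ s : Finset V,
      if (∀ u ∈ s, ∀ v ∈ s, ¬ G.Adj u v) then (-1 : ℤ) ^ s.card else 0 := by
  rw [fgraph, Finset.sum_filter]

/-- Mapping a finset of a subtype into the ambient type, as an embedding. -/
def finmapEmb (A : Set V) : Finset A ↪ Finset V :=
  ⟨fun t => t.map (Function.Embedding.subtype (· ∈ A)),
   fun _ _ h => Finset.map_injective _ h⟩

open Classical in
lemma fdel_eq_sum_ite (G : SimpleGraph V) (A : Set V) :
    fdel G A = ∑ s : Finset V,
      if ((∀ u ∈ s, ∀ v ∈ s, ¬ G.Adj u v) ∧ ∀ x ∈ s, x ∈ A) then (-1 : ℤ) ^ s.card else 0 := by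
  rw [fdel, fgraph_eq_sum_ite]
  have hemb : ∀ t : Finset A, finmapEmb A t = t.map (Function.Embedding.subtype (· ∈ A)) :=
    fun t => rfl
  have huniv : (univ : Finset (Finset A)).map (finmapEmb A)
      = univ.filter (fun s : Finset V => ∀ x ∈ s, x ∈ A) := by
    ext s
    simp only [Finset.mem_map, Finset.mem_filter, Finset.mem_univ, true_and]
    constructor
    · rintro ⟨t, rfl⟩ x hx
      rw [hemb] at hx
      simp only [Finset.mem_map, Function.Embedding.coe_subtype] at hx
      obtain ⟨a, -, rfl⟩ := hx
      exact a.2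
    · intro hs
      refine ⟨s.subtype (· ∈ A), ?_⟩
      rw [hemb]
      exact Finset.subtype_map_of_mem hs
  have step : (∑ s : Finset V,
      if ((∀ u ∈ s, ∀ v ∈ s, ¬ G.Adj u v) ∧ ∀ x ∈ s, x ∈ A) then (-1 : ℤ) ^ s.card else 0)
      = ∑ s ∈ univ.filter (fun s : Finset V => ∀ x ∈ s, x ∈ A),
          if (∀ u ∈ s, ∀ v ∈ s, ¬ G.Adj u v) then (-1 : ℤ) ^ s.card else 0 := by
    rw [Finset.sum_filter]
    refine Finset.sum_congr rfl fun s _ => ?_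
    by_cases h1 : (∀ x ∈ s, x ∈ A)
    · by_cases h2 : (∀ u ∈ s, ∀ v ∈ s, ¬ G.Adj u v)
      · rw [if_pos (And.intro h2 h1), if_pos h1, if_pos h2]
      · rw [if_neg (fun h => h2 h.1), if_pos h1, if_neg h2]
    · rw [if_neg (fun h => h1 h.2), if_neg h1]
  rw [step, ← huniv, Finset.sum_map]
  refine Finset.sum_congr rfl fun t _ => ?_
  rw [hemb]
  have hiff : (∀ u ∈ t, ∀ v ∈ t, ¬(SimpleGraph.induce A G).Adj u v) ↔
      (∀ u ∈ t.map (Function.Embedding.subtype (· ∈ A)),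
        ∀ v ∈ t.map (Function.Embedding.subtype (· ∈ A)), ¬G.Adj u v) := by
    constructor
    · intro h x hx y hy hadj
      simp only [Finset.mem_map, Function.Embedding.coe_subtype] at hx hy
      obtain ⟨a, ha, rfl⟩ := hx
      obtain ⟨b, hb, rfl⟩ := hy
      exact h a ha b hb hadj
    · intro h u hu u' hu' hadj
      exact h u.1 (by simp [hu]) u'.1 (by simp [hu']) hadj
  rw [Finset.card_map]
  exact ite_prop_congr hiff _ _

section Pair

variable {W : Type*} [Fintype W]

open Classical in
/-- The equivalence between pairs of finsets and finsets of a sum type. -/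
noncomputable def combEquiv (V W : Type*) [Fintype V] [Fintype W] :
    Finset V × Finset W ≃ Finset (V ⊕ W) where
  toFun p := p.1.map ⟨Sum.inl, Sum.inl_injective⟩ ∪ p.2.map ⟨Sum.inr, Sum.inr_injective⟩
  invFun s := (univ.filter (fun a => Sum.inl a ∈ s), univ.filter (fun b => Sum.inr b ∈ s))
  left_inv p := by
    obtain ⟨A, B⟩ := p
    simp only [Prod.mk.injEq]
    constructor <;> (ext x; simp)
  right_inv s := by
    ext x
    cases x <;> simp

open Classical in
lemma combEquiv_card (p : Finset V × Finset W) :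
    (combEquiv V W p).card = p.1.card + p.2.card := by
  obtain ⟨A, B⟩ := p
  rw [combEquiv]
  simp only [Equiv.coe_fn_mk]
  rw [Finset.card_union_of_disjoint, Finset.card_map, Finset.card_map]
  simp [Finset.disjoint_left]

open Classical in
lemma mem_combEquiv_inl (p : Finset V × Finset W) (a : V) :
    Sum.inl a ∈ combEquiv V W p ↔ a ∈ p.1 := by
  rw [combEquiv]; simp

open Classical in
lemma mem_combEquiv_inr (p : Finset V × Finset W) (b : W) :
    Sum.inr b ∈ combEquiv V W p ↔ b ∈ p.2 := by
  rw [combEquiv]; simp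

lemma sub_mul_congr {a b c d a' b' c' d' : ℤ} (h1 : a = a') (h2 : b = b')
    (h3 : c = c') (h4 : d = d') : a * b - c * d = a' * b' - c' * d' := by
  rw [h1, h2, h3, h4]

lemma ite_split (p q r s : Prop) [Decidable p] [Decidable q] [Decidable r] [Decidable s]
    [Decidable ((p ∧ q) ∧ ¬(r ∧ s))] [Decidable (p ∧ r)] [Decidable (q ∧ s)] (x y : ℤ) :
    (if (p ∧ q) ∧ ¬(r ∧ s) then x * y else 0)
      = (if p then x else 0) * (if q then y else 0)
        - (if p ∧ r then x else 0) * (if q ∧ s then y else 0) := by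
  by_cases hp : p <;> by_cases hq : q <;> by_cases hr : r <;> by_cases hs : s <;>
    simp [hp, hq, hr, hs]

lemma double_sum_prod (f g : Finset V → ℤ) (h k : Finset W → ℤ) :
    (∑ A : Finset V, ∑ B : Finset W, (f A * h B - g A * k B))
      = (∑ A : Finset V, f A) * (∑ B : Finset W, h B)
        - (∑ A : Finset V, g A) * (∑ B : Finset W, k B) := by
  rw [Finset.sum_mul_sum, Finset.sum_mul_sum, ← Finset.sum_sub_distrib]
  exact Finset.sum_congr rfl fun A _ => by rw [← Finset.sum_sub_distrib]

open Classical in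
lemma pair_sum (P : Finset V → Prop) (Q : Finset W → Prop)
    (F : Finset (V ⊕ W) → Prop) (v : V) (w : W)
    (hF : ∀ p : Finset V × Finset W,
      F (combEquiv V W p) ↔ (P p.1 ∧ Q p.2) ∧ ¬(v ∈ p.1 ∧ w ∈ p.2)) :
    (∑ s : Finset (V ⊕ W), if F s then (-1 : ℤ) ^ s.card else 0)
    = (∑ A : Finset V, if P A then (-1 : ℤ) ^ A.card else 0) *
        (∑ B : Finset W, if Q B then (-1 : ℤ) ^ B.card else 0)
      - (∑ A : Finset V, if P A ∧ v ∈ A then (-1 : ℤ) ^ A.card else 0) *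
        (∑ B : Finset W, if Q B ∧ w ∈ B then (-1 : ℤ) ^ B.card else 0) := by
  rw [← Equiv.sum_comp (combEquiv V W) (fun s => if F s then (-1 : ℤ) ^ s.card else 0),
    Fintype.sum_prod_type, ← double_sum_prod]
  refine Finset.sum_congr rfl fun A _ => Finset.sum_congr rfl fun B _ => ?_
  have h1 : (if F (combEquiv V W (A, B)) then (-1 : ℤ) ^ (combEquiv V W (A, B)).card else 0)
      = if (P A ∧ Q B) ∧ ¬(v ∈ A ∧ w ∈ B)
          then (-1 : ℤ) ^ A.card * (-1 : ℤ) ^ B.card else 0 := by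
    rw [combEquiv_card, pow_add]
    exact ite_prop_congr (hF (A, B)) _ _
  rw [h1, ite_split]

/-! ### Adjacency in the glued graph -/

lemma glue_adj {G : SimpleGraph V} {H : SimpleGraph W} {v : V} {w : W} {x y : V ⊕ W} :
    (glue G H v w).Adj x y ↔
      (G ⊕g H).Adj x y ∨ (x = Sum.inl v ∧ y = Sum.inr w) ∨ (x = Sum.inr w ∧ y = Sum.inl v) := by
  simp only [glue, SimpleGraph.sup_adj, SimpleGraph.fromEdgeSet_adj, Set.mem_singleton_iff,
    Sym2.eq, Sym2.rel_iff', Prod.mk.injEq, Prod.swap_prod_mk, ne_eq]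
  constructor
  · rintro (h | ⟨(⟨rfl, rfl⟩ | ⟨rfl, rfl⟩), -⟩)
    · exact Or.inl h
    · exact Or.inr (Or.inl ⟨rfl, rfl⟩)
    · exact Or.inr (Or.inr ⟨rfl, rfl⟩)
  · rintro (h | ⟨rfl, rfl⟩ | ⟨rfl, rfl⟩)
    · exact Or.inl h
    · exact Or.inr ⟨Or.inl ⟨rfl, rfl⟩, by simp⟩
    · exact Or.inr ⟨Or.inr ⟨rfl, rfl⟩, by simp⟩

lemma indep_glue {G : SimpleGraph V} {H : SimpleGraph W} {v : V} {w : W}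
    (p : Finset V × Finset W) :
    (∀ x ∈ combEquiv V W p, ∀ y ∈ combEquiv V W p, ¬(glue G H v w).Adj x y)
      ↔ ((∀ u ∈ p.1, ∀ u' ∈ p.1, ¬G.Adj u u') ∧ (∀ u ∈ p.2, ∀ u' ∈ p.2, ¬H.Adj u u'))
          ∧ ¬(v ∈ p.1 ∧ w ∈ p.2) := by
  obtain ⟨A, B⟩ := p
  constructor
  · intro h
    refine ⟨⟨fun a ha a' ha' hadj => h (Sum.inl a) ((mem_combEquiv_inl _ _).mpr ha)
        (Sum.inl a') ((mem_combEquiv_inl _ _).mpr ha') (glue_adj.mpr (Or.inl hadj)),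
      fun b hb b' hb' hadj => h (Sum.inr b) ((mem_combEquiv_inr _ _).mpr hb)
        (Sum.inr b') ((mem_combEquiv_inr _ _).mpr hb') (glue_adj.mpr (Or.inl hadj))⟩,
      fun ⟨hv, hw⟩ => h (Sum.inl v) ((mem_combEquiv_inl _ _).mpr hv)
        (Sum.inr w) ((mem_combEquiv_inr _ _).mpr hw)
        (glue_adj.mpr (Or.inr (Or.inl ⟨rfl, rfl⟩)))⟩
  · rintro ⟨⟨hA, hB⟩, hvw⟩ x hx y hy hadj
    rcases glue_adj.mp hadj with h | ⟨rfl, rfl⟩ | ⟨rfl, rfl⟩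
    · cases x with
      | inl a =>
        cases y with
        | inl a' =>
          exact hA a ((mem_combEquiv_inl _ _).mp hx) a' ((mem_combEquiv_inl _ _).mp hy) h
        | inr b => simpa using h
      | inr b =>
        cases y with
        | inl a => simpa using h
        | inr b' =>
          exact hB b ((mem_combEquiv_inr _ _).mp hx) b' ((mem_combEquiv_inr _ _).mp hy) h
    · exact hvw ⟨(mem_combEquiv_inl _ _).mp hx, (mem_combEquiv_inr _ _).mp hy⟩
    · exact hvw ⟨(mem_combEquiv_inl _ _).mp hy, (mem_combEquiv_inr _ _).mp hx⟩

/-! ### Expansion lemmas for the glued graph -/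

open Classical in
lemma fgraph_glue_eq (G : SimpleGraph V) (H : SimpleGraph W) (v : V) (w : W) :
    fgraph (glue G H v w)
    = (∑ A : Finset V, if (∀ u ∈ A, ∀ u' ∈ A, ¬G.Adj u u') then (-1 : ℤ) ^ A.card else 0) *
        (∑ B : Finset W, if (∀ u ∈ B, ∀ u' ∈ B, ¬H.Adj u u') then (-1 : ℤ) ^ B.card else 0)
      - (∑ A : Finset V, if (∀ u ∈ A, ∀ u' ∈ A, ¬G.Adj u u') ∧ v ∈ A
            then (-1 : ℤ) ^ A.card else 0) *
        (∑ B : Finset W, if (∀ u ∈ B, ∀ u' ∈ B, ¬H.Adj u u') ∧ w ∈ B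
            then (-1 : ℤ) ^ B.card else 0) := by
  rw [fgraph_eq_sum_ite]
  refine Eq.trans (Finset.sum_congr rfl fun s _ => ite_prop_congr Iff.rfl _ _)
    (Eq.trans (pair_sum (fun A => ∀ u ∈ A, ∀ u' ∈ A, ¬G.Adj u u')
      (fun B => ∀ u ∈ B, ∀ u' ∈ B, ¬H.Adj u u')
      (fun s => ∀ u ∈ s, ∀ y ∈ s, ¬(glue G H v w).Adj u y) v w
      (fun p => indep_glue p))
      (sub_mul_congr (Finset.sum_congr rfl fun A _ => ite_prop_congr Iff.rfl _ _)
        (Finset.sum_congr rfl fun B _ => ite_prop_congr Iff.rfl _ _)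
        (Finset.sum_congr rfl fun A _ => ite_prop_congr Iff.rfl _ _)
        (Finset.sum_congr rfl fun B _ => ite_prop_congr Iff.rfl _ _)))

open Classical in
lemma fdel_glue_eq (G : SimpleGraph V) (H : SimpleGraph W) (v : V) (w : W) (v' : W) :
    fdel (glue G H v w) {x | x ≠ Sum.inr v'}
    = (∑ A : Finset V, if (∀ u ∈ A, ∀ u' ∈ A, ¬G.Adj u u') then (-1 : ℤ) ^ A.card else 0) *
        (∑ B : Finset W, if (∀ u ∈ B, ∀ u' ∈ B, ¬H.Adj u u') ∧ v' ∉ B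
            then (-1 : ℤ) ^ B.card else 0)
      - (∑ A : Finset V, if (∀ u ∈ A, ∀ u' ∈ A, ¬G.Adj u u') ∧ v ∈ A
            then (-1 : ℤ) ^ A.card else 0) *
        (∑ B : Finset W, if ((∀ u ∈ B, ∀ u' ∈ B, ¬H.Adj u u') ∧ v' ∉ B) ∧ w ∈ B
            then (-1 : ℤ) ^ B.card else 0) := by
  rw [fdel_eq_sum_ite]
  refine Eq.trans (Finset.sum_congr rfl fun s _ => ite_prop_congr Iff.rfl _ _)
    (Eq.trans (pair_sum (fun A => ∀ u ∈ A, ∀ u' ∈ A, ¬G.Adj u u')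
      (fun B => (∀ u ∈ B, ∀ u' ∈ B, ¬H.Adj u u') ∧ v' ∉ B)
      (fun s => (∀ u ∈ s, ∀ y ∈ s, ¬(glue G H v w).Adj u y) ∧
        ∀ x ∈ s, x ∈ {x : V ⊕ W | x ≠ Sum.inr v'}) v w (fun p => ?_))
      (sub_mul_congr (Finset.sum_congr rfl fun A _ => ite_prop_congr Iff.rfl _ _)
        (Finset.sum_congr rfl fun B _ => ite_prop_congr Iff.rfl _ _)
        (Finset.sum_congr rfl fun A _ => ite_prop_congr Iff.rfl _ _)
        (Finset.sum_congr rfl fun B _ => ite_prop_congr Iff.rfl _ _)))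
  have hmem : (∀ x ∈ combEquiv V W p, x ∈ {x : V ⊕ W | x ≠ Sum.inr v'}) ↔ v' ∉ p.2 := by
    constructor
    · intro h hv'
      exact h (Sum.inr v') ((mem_combEquiv_inr _ _).mpr hv') rfl
    · intro hv' x hx
      cases x with
      | inl a => simp
      | inr b =>
        intro hb
        rw [Sum.inr.injEq] at hb
        subst hb
        exact hv' ((mem_combEquiv_inr _ _).mp hx)
  beta_reduce
  rw [hmem, indep_glue p]
  tauto

end Pair

/-! ### Value extraction on the `G` side -/

open Classical in
lemma Gside (G : SimpleGraph V) (v : V) (n k : ℤ)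
    (hn : fgraph G = n) (hk : fdel G {u | u ≠ v} = k) :
    (∑ A : Finset V, if (∀ u ∈ A, ∀ u' ∈ A, ¬G.Adj u u') then (-1 : ℤ) ^ A.card else 0) = n ∧
    (∑ A : Finset V, if (∀ u ∈ A, ∀ u' ∈ A, ¬G.Adj u u') ∧ v ∈ A
        then (-1 : ℤ) ^ A.card else 0) = n - k := by
  have h1 : (∑ A : Finset V, if (∀ u ∈ A, ∀ u' ∈ A, ¬G.Adj u u')
      then (-1 : ℤ) ^ A.card else 0) = n := by
    rw [← fgraph_eq_sum_ite]; exact hn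
  have h2 : (∑ A : Finset V, if (∀ u ∈ A, ∀ u' ∈ A, ¬G.Adj u u') ∧ v ∉ A
      then (-1 : ℤ) ^ A.card else 0) = k := by
    rw [← hk, fdel_eq_sum_ite]
    refine Finset.sum_congr rfl fun A _ => ite_prop_congr ?_ _ _
    constructor
    · rintro ⟨hA, hv⟩
      exact ⟨hA, fun x hx hxv => hv (hxv ▸ hx)⟩
    · rintro ⟨hA, hv⟩
      exact ⟨hA, fun hvA => hv v hvA rfl⟩
  have h3 : (∑ A : Finset V, if (∀ u ∈ A, ∀ u' ∈ A, ¬G.Adj u u')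
        then (-1 : ℤ) ^ A.card else 0)
      = (∑ A : Finset V, if (∀ u ∈ A, ∀ u' ∈ A, ¬G.Adj u u') ∧ v ∈ A
          then (-1 : ℤ) ^ A.card else 0)
        + (∑ A : Finset V, if (∀ u ∈ A, ∀ u' ∈ A, ¬G.Adj u u') ∧ v ∉ A
          then (-1 : ℤ) ^ A.card else 0) := by
    rw [← Finset.sum_add_distrib]
    refine Finset.sum_congr rfl fun A _ => ?_
    by_cases hA : (∀ u ∈ A, ∀ u' ∈ A, ¬G.Adj u u')
    · by_cases hv : v ∈ A
      · rw [if_pos hA, if_pos ⟨hA, hv⟩, if_neg (fun h => h.2 hv), add_zero]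
      · rw [if_pos hA, if_neg (fun h => hv h.2), if_pos ⟨hA, hv⟩, zero_add]
    · rw [if_neg hA, if_neg (fun h => hA h.1), if_neg (fun h => hA h.1), add_zero]
  refine ⟨h1, ?_⟩
  have := h3
  rw [h1, h2] at this
  linarith

end Infra

/-! ### Hexagon computations -/

lemma hexD : ∀ w v' : Fin 6, (SimpleGraph.cycleGraph 6).Adj w v' →
    ((∑ B : Finset (Fin 6), if (∀ u ∈ B, ∀ u' ∈ B, ¬(SimpleGraph.cycleGraph 6).Adj u u')
        then (-1 : ℤ) ^ B.card else 0) = 2 ∧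
     (∑ B : Finset (Fin 6), if (∀ u ∈ B, ∀ u' ∈ B, ¬(SimpleGraph.cycleGraph 6).Adj u u') ∧ w ∈ B
        then (-1 : ℤ) ^ B.card else 0) = 1 ∧
     (∑ B : Finset (Fin 6), if (∀ u ∈ B, ∀ u' ∈ B, ¬(SimpleGraph.cycleGraph 6).Adj u u') ∧ v' ∉ B
        then (-1 : ℤ) ^ B.card else 0) = 1 ∧
     (∑ B : Finset (Fin 6),
        if ((∀ u ∈ B, ∀ u' ∈ B, ¬(SimpleGraph.cycleGraph 6).Adj u u') ∧ v' ∉ B) ∧ w ∈ B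
        then (-1 : ℤ) ^ B.card else 0) = 1) := by
  set_option maxRecDepth 10000 in decide

lemma hex1 (i1 : ∀ B : Finset (Fin 6),
      Decidable (∀ u ∈ B, ∀ u' ∈ B, ¬(SimpleGraph.cycleGraph 6).Adj u u')) :
    (∑ B : Finset (Fin 6),
      @ite ℤ (∀ u ∈ B, ∀ u' ∈ B, ¬(SimpleGraph.cycleGraph 6).Adj u u') (i1 B)
        ((-1 : ℤ) ^ B.card) 0) = 2 :=
  (Finset.sum_congr rfl fun B _ => ite_prop_congr Iff.rfl _ _).trans (hexD 0 1 (by decide)).1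

lemma hex2 (w v' : Fin 6) (hadj : (SimpleGraph.cycleGraph 6).Adj w v')
    (i2 : ∀ B : Finset (Fin 6),
      Decidable ((∀ u ∈ B, ∀ u' ∈ B, ¬(SimpleGraph.cycleGraph 6).Adj u u') ∧ w ∈ B)) :
    (∑ B : Finset (Fin 6),
      @ite ℤ ((∀ u ∈ B, ∀ u' ∈ B, ¬(SimpleGraph.cycleGraph 6).Adj u u') ∧ w ∈ B) (i2 B)
        ((-1 : ℤ) ^ B.card) 0) = 1 :=
  (Finset.sum_congr rfl fun B _ => ite_prop_congr Iff.rfl _ _).trans (hexD w v' hadj).2.1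

lemma hex3 (w v' : Fin 6) (hadj : (SimpleGraph.cycleGraph 6).Adj w v')
    (i3 : ∀ B : Finset (Fin 6),
      Decidable ((∀ u ∈ B, ∀ u' ∈ B, ¬(SimpleGraph.cycleGraph 6).Adj u u') ∧ v' ∉ B)) :
    (∑ B : Finset (Fin 6),
      @ite ℤ ((∀ u ∈ B, ∀ u' ∈ B, ¬(SimpleGraph.cycleGraph 6).Adj u u') ∧ v' ∉ B) (i3 B)
        ((-1 : ℤ) ^ B.card) 0) = 1 :=
  (Finset.sum_congr rfl fun B _ => ite_prop_congr Iff.rfl _ _).trans (hexD w v' hadj).2.2.1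

lemma hex4 (w v' : Fin 6) (hadj : (SimpleGraph.cycleGraph 6).Adj w v')
    (i4 : ∀ B : Finset (Fin 6),
      Decidable (((∀ u ∈ B, ∀ u' ∈ B, ¬(SimpleGraph.cycleGraph 6).Adj u u') ∧ v' ∉ B) ∧ w ∈ B)) :
    (∑ B : Finset (Fin 6),
      @ite ℤ (((∀ u ∈ B, ∀ u' ∈ B, ¬(SimpleGraph.cycleGraph 6).Adj u u') ∧ v' ∉ B) ∧ w ∈ B)
        (i4 B) ((-1 : ℤ) ^ B.card) 0) = 1 :=
  (Finset.sum_congr rfl fun B _ => ite_prop_congr Iff.rfl _ _).trans (hexD w v' hadj).2.2.2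

lemma finish1 (SG SGv SH SHw n k : ℤ) (h1 : SG = n) (h2 : SGv = n - k)
    (h3 : SH = 2) (h4 : SHw = 1) : SG * SH - SGv * SHw = n + k := by
  subst h1 h2 h3 h4; ring

lemma finish2 (SG SGv SH SHw n k : ℤ) (h1 : SG = n) (h2 : SGv = n - k)
    (h3 : SH = 1) (h4 : SHw = 1) : SG * SH - SGv * SHw = k := by
  subst h1 h2 h3 h4; ring

/-! ### Main theorem -/

/-- Attaching a hexagon `H` to a brick `(G, v)` of type `(n, k)` by an edge `v–w`
and choosing `v'` adjacent to `w` in `H` gives a brick of type `(n + k, k)`. -/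
theorem hexagon_attachment {V : Type*} [Fintype V] (G : SimpleGraph V) (v : V)
    (n k : ℤ) (hn : fgraph G = n) (hk : fdel G {u | u ≠ v} = k)
    (w v' : Fin 6) (hadj : (SimpleGraph.cycleGraph 6).Adj w v') :
    fgraph (glue G (SimpleGraph.cycleGraph 6) v w) = n + k ∧
    fdel (glue G (SimpleGraph.cycleGraph 6) v w) {x | x ≠ Sum.inr v'} = k := by
  obtain ⟨hG1, hG2⟩ := Gside G v n k hn hk
  constructor
  · rw [fgraph_glue_eq G (SimpleGraph.cycleGraph 6) v w]
    exact finish1 _ _ _ _ n k hG1 hG2 (hex1 _) (hex2 w v' hadj _)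
  · rw [fdel_glue_eq G (SimpleGraph.cycleGraph 6) v w v']
    exact finish2 _ _ _ _ n k hG1 hG2 (hex3 w v' hadj _) (hex4 w v' hadj _)
end

section
/- Let G_1, ..., G_k be graphs with chosen vertices v_i ∈ G_i, where f(G_i) = n_i and f(G_i - v_i) = m_i. Let S be the graph obtained from the disjoint union of G_1, ..., G_k and one extra vertex w by joining w to each v_i by an edge. Then f(S) = ∏_{i=1}^k n_i − ∏_{i=1}^k m_i and f(S - w) = ∏_{i=1}^k n_i. -/
open Finset
open Finset

/-- Adjacency within the disjoint union of a family of graphs. -/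
def sigmaAdj {ι : Type*} {V : ι → Type*} (G : ∀ i, SimpleGraph (V i)) :
    (Σ i, V i) → (Σ i, V i) → Prop
  | ⟨i, a⟩, ⟨j, b⟩ => ∃ h : j = i, (G i).Adj a (h ▸ b)

/-- The simple building `S(G₁^{v₁}, …, G_k^{v_k})`: the disjoint union of the `G i`
together with a central vertex (`none`) joined to each `v i` by an edge. -/
def simpleBuilding {ι : Type*} {V : ι → Type*} (G : ∀ i, SimpleGraph (V i))
    (v : ∀ i, V i) : SimpleGraph (Option (Σ i, V i)) :=
  SimpleGraph.fromRel (fun x y => match x, y with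
    | some a, some b => sigmaAdj G a b
    | some a, none => a.2 = v a.1
    | none, _ => False)

/-- The complicated building `C(G₁^{v₁}, …, G_k^{v_k})`: the disjoint union of the `G i`
together with a central vertex `w = none` and intermediate vertices `w_i = some (inr i)`,
with edges `w – w_i` and `w_i – v_i`. -/
def complBuilding {ι : Type*} {V : ι → Type*} (G : ∀ i, SimpleGraph (V i))
    (v : ∀ i, V i) : SimpleGraph (Option ((Σ i, V i) ⊕ ι)) :=
  SimpleGraph.fromRel (fun x y => match x, y with
    | some (.inl a), some (.inl b) => sigmaAdj G a b
    | some (.inl a), some (.inr i) => a.1 = i ∧ a.2 = v a.1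
    | some (.inr _), none => True
    | _, _ => False)

open Classical in
/-- Signed sum over all subsets of `A` that are independent with respect to `r`. -/
noncomputable def fsum {T : Type*} [Fintype T] (r : T → T → Prop) (A : Set T) : ℤ :=
  ∑ s ∈ Finset.univ.filter (fun s : Finset T =>
    (∀ x ∈ s, x ∈ A) ∧ ∀ u ∈ s, ∀ w ∈ s, ¬ r u w), (-1 : ℤ) ^ s.card

lemma fsum_congr_rel {T : Type*} [Fintype T] {r r' : T → T → Prop} (A : Set T)
    (h : ∀ s : Finset T,
      (∀ u ∈ s, ∀ w ∈ s, ¬ r u w) ↔ ∀ u ∈ s, ∀ w ∈ s, ¬ r' u w) :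
    fsum r A = fsum r' A := by
  classical
  unfold fsum
  congr 1
  ext s
  simp only [Finset.mem_filter, Finset.mem_univ, true_and]
  exact and_congr_right fun _ => h s

lemma fgraph_eq_fsum {V : Type*} [Fintype V] (G : SimpleGraph V) :
    fgraph G = fsum G.Adj Set.univ := by
  classical
  unfold fgraph fsum
  congr 1
  ext s
  simp only [Finset.mem_filter, Finset.mem_univ, true_and, Set.mem_univ]
  simp

lemma fdel_eq_fsum {V : Type*} [Fintype V] (G : SimpleGraph V) (A : Set V) :
    fdel G A = fsum G.Adj A := by
  classical
  unfold fdel fgraph fsum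
  refine Finset.sum_nbij' (fun s : Finset A => s.map (Function.Embedding.subtype _))
    (fun s => s.subtype (· ∈ A)) ?_ ?_ ?_ ?_ ?_
  · intro s hs
    simp only [mem_filter, mem_univ, true_and] at hs ⊢
    constructor
    · rintro x hx
      simp only [Finset.mem_map, Function.Embedding.coe_subtype] at hx
      obtain ⟨a, _, rfl⟩ := hx
      exact a.2
    · rintro u hu w hw hadj
      simp only [Finset.mem_map, Function.Embedding.coe_subtype] at hu hw
      obtain ⟨a, ha, rfl⟩ := hu
      obtain ⟨b, hb, rfl⟩ := hw
      exact hs a ha b hb hadj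
  · intro s hs
    simp only [mem_filter, mem_univ, true_and] at hs ⊢
    rintro u hu w hw hadj
    simp only [Finset.mem_subtype] at hu hw
    exact hs.2 u hu w hw hadj
  · intro s _
    ext a
    simp
  · intro s hs
    simp only [mem_filter, mem_univ, true_and] at hs
    exact Finset.subtype_map_of_mem hs.1
  · intro s hs
    simp only [mem_filter, mem_univ, true_and] at hs
    rw [Finset.card_map]

open Classical in
lemma sigma_fsum {ι : Type*} [Fintype ι] {V : ι → Type*} [∀ i, Fintype (V i)]
    (G : ∀ i, SimpleGraph (V i)) (A : ∀ i, Set (V i)) :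
    fsum (sigmaAdj G) {x : Σ i, V i | x.2 ∈ A x.1} = ∏ i, fsum (G i).Adj (A i) := by
  unfold fsum
  rw [Finset.prod_univ_sum]
  refine Finset.sum_nbij'
    (fun s => fun i => s.preimage (Sigma.mk i) sigma_mk_injective.injOn)
    (fun t => Finset.univ.sigma t) ?_ ?_ ?_ ?_ ?_
  · intro s hs
    simp only [mem_filter, mem_univ, true_and] at hs
    rw [Fintype.mem_piFinset]
    intro i
    simp only [mem_filter, mem_univ, true_and]
    constructor
    · intro a ha
      rw [Finset.mem_preimage] at ha
      exact hs.1 ⟨i, a⟩ ha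
    · intro a ha b hb hadj
      rw [Finset.mem_preimage] at ha hb
      exact hs.2 ⟨i, a⟩ ha ⟨i, b⟩ hb ⟨rfl, hadj⟩
  · intro t ht
    rw [Fintype.mem_piFinset] at ht
    simp only [mem_filter, mem_univ, true_and] at ht ⊢
    constructor
    · rintro ⟨i, a⟩ ha
      rw [Finset.mem_sigma] at ha
      exact (ht i).1 a ha.2
    · rintro ⟨i, a⟩ ha ⟨j, b⟩ hb ⟨h, hadj⟩
      subst h
      rw [Finset.mem_sigma] at ha hb
      exact (ht j).2 a ha.2 b hb.2 hadj
  · intro s _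
    ext ⟨i, a⟩
    simp [Finset.mem_sigma, Finset.mem_preimage]
  · intro t _
    funext i
    ext a
    simp [Finset.mem_sigma, Finset.mem_preimage]
  · intro s hs
    have h : s = Finset.univ.sigma
        (fun i => s.preimage (Sigma.mk i) sigma_mk_injective.injOn) := by
      ext ⟨i, a⟩
      simp [Finset.mem_sigma, Finset.mem_preimage]
    rw [Finset.prod_pow_eq_pow_sum]
    congr 1
    conv_lhs => rw [h]
    rw [Finset.card_sigma]

open Classical in
lemma fsum_map_emb {T U : Type*} [Fintype T] [Fintype U] (e : T ↪ U)
    (r : U → U → Prop) (A : Set T) (B : Set U)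
    (hmem : ∀ a, e a ∈ B ↔ a ∈ A) (hrange : ∀ x ∈ B, ∃ a, e a = x) :
    fsum r B = fsum (fun a b => r (e a) (e b)) A := by
  unfold fsum
  have key : ∀ s : Finset U, (∀ x ∈ s, x ∈ B) →
      (s.preimage e e.injective.injOn).map e = s := by
    intro s hs
    ext x
    simp only [Finset.mem_map, Finset.mem_preimage]
    constructor
    · rintro ⟨a, ha, rfl⟩; exact ha
    · intro hx
      obtain ⟨a, rfl⟩ := hrange x (hs x hx)
      exact ⟨a, hx, rfl⟩
  refine Finset.sum_nbij' (fun s => s.preimage e e.injective.injOn)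
    (fun s => s.map e) ?_ ?_ ?_ ?_ ?_
  · intro s hs
    simp only [mem_filter, mem_univ, true_and] at hs ⊢
    obtain ⟨hsub, hind⟩ := hs
    constructor
    · intro a ha
      rw [Finset.mem_preimage] at ha
      exact (hmem a).mp (hsub _ ha)
    · intro u hu w hw
      rw [Finset.mem_preimage] at hu hw
      exact hind _ hu _ hw
  · intro s hs
    simp only [mem_filter, mem_univ, true_and] at hs ⊢
    obtain ⟨hsub, hind⟩ := hs
    constructor
    · intro x hx
      simp only [Finset.mem_map] at hx
      obtain ⟨a, ha, rfl⟩ := hx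
      exact (hmem a).mpr (hsub a ha)
    · intro u hu w hw
      simp only [Finset.mem_map] at hu hw
      obtain ⟨a, ha, rfl⟩ := hu
      obtain ⟨b, hb, rfl⟩ := hw
      exact hind a ha b hb
  · intro s hs
    simp only [mem_filter, mem_univ, true_and] at hs
    exact key s hs.1
  · intro s _
    ext a
    simp [Finset.mem_preimage, e.injective.eq_iff]
  · intro s hs
    simp only [mem_filter, mem_univ, true_and] at hs
    conv_lhs => rw [← key s hs.1, Finset.card_map]

open Classical in
lemma fsum_split {T : Type*} [Fintype T] (r : T → T → Prop) (w : T)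
    (hirr : ¬ r w w) (hsymm : ∀ x y, r x y → r y x) :
    fsum r Set.univ = fsum r {x | x ≠ w} - fsum r {x | x ≠ w ∧ ¬ r x w} := by
  unfold fsum
  rw [sub_eq_add_neg, ← Finset.sum_neg_distrib]
  rw [← Finset.sum_filter_add_sum_filter_not _ (fun s : Finset T => w ∉ s) _]
  congr 1
  · congr 1
    ext s
    simp only [Finset.mem_filter, Finset.mem_univ, true_and, Set.mem_univ,
      Set.mem_setOf_eq]
    constructor
    · rintro ⟨⟨-, hind⟩, hw⟩
      exact ⟨fun x hx hxw => hw (hxw ▸ hx), hind⟩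
    · rintro ⟨hsub, hind⟩
      exact ⟨⟨fun _ _ => trivial, hind⟩, fun hw => hsub w hw rfl⟩
  · refine Finset.sum_nbij' (fun s => s.erase w) (fun s => insert w s) ?_ ?_ ?_ ?_ ?_
    · intro s hs
      simp only [Finset.mem_filter, Finset.mem_univ, true_and, Set.mem_univ,
        Set.mem_setOf_eq, not_not] at hs ⊢
      obtain ⟨⟨-, hind⟩, hw⟩ := hs
      constructor
      · intro x hx
        rw [Finset.mem_erase] at hx
        exact ⟨hx.1, fun hr => hind x hx.2 w hw hr⟩
      · intro u hu x hx
        exact hind u (Finset.mem_of_mem_erase hu) x (Finset.mem_of_mem_erase hx)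
    · intro s hs
      simp only [Finset.mem_filter, Finset.mem_univ, true_and, Set.mem_univ,
        Set.mem_setOf_eq, not_not] at hs ⊢
      obtain ⟨hsub, hind⟩ := hs
      refine ⟨⟨fun _ _ => trivial, ?_⟩, Finset.mem_insert_self _ _⟩
      intro u hu x hx
      rw [Finset.mem_insert] at hu hx
      rcases hu with rfl | hu <;> rcases hx with rfl | hx
      · exact hirr
      · exact fun hr => (hsub x hx).2 (hsymm _ _ hr)
      · exact (hsub u hu).2
      · exact hind u hu x hx
    · intro s hs
      simp only [Finset.mem_filter, not_not] at hs
      exact Finset.insert_erase hs.2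
    · intro s hs
      simp only [Finset.mem_filter, Finset.mem_univ, true_and, Set.mem_setOf_eq] at hs
      exact Finset.erase_insert fun hw => (hs.1 w hw).1 rfl
    · intro s hs
      simp only [Finset.mem_filter, not_not] at hs
      rw [← Finset.card_erase_add_one hs.2, pow_succ]
      ring

open Classical in
theorem simpleBuilding_f {ι : Type*} [Fintype ι] {V : ι → Type*} [∀ i, Fintype (V i)]
    (G : ∀ i, SimpleGraph (V i)) (v : ∀ i, V i) (n m : ι → ℤ)
    (hn : ∀ i, fgraph (G i) = n i) (hm : ∀ i, fdel (G i) {u | u ≠ v i} = m i) :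
    fgraph (simpleBuilding G v) = (∏ i, n i) - ∏ i, m i ∧
    fdel (simpleBuilding G v) {x | x ≠ none} = ∏ i, n i := by
  classical
  set S := simpleBuilding G v with hS
  -- basic adjacency facts
  have sirr : ∀ x : Σ i, V i, ¬ sigmaAdj G x x := by
    rintro ⟨i, a⟩ ⟨h, hadj⟩
    have hr : h = rfl := rfl
    rw [hr] at hadj
    exact (G i).irrefl hadj
  have adj_some : ∀ a b : Σ i, V i,
      S.Adj (some a) (some b) ↔ a ≠ b ∧ (sigmaAdj G a b ∨ sigmaAdj G b a) := by
    intro a b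
    rw [hS, simpleBuilding, SimpleGraph.fromRel_adj]
    simp
  have adj_none : ∀ a : Σ i, V i, S.Adj (some a) none ↔ a.2 = v a.1 := by
    intro a
    rw [hS, simpleBuilding, SimpleGraph.fromRel_adj]
    simp
  -- pairwise independence transfer over `some`
  have pair_iff : ∀ s : Finset (Σ i, V i),
      (∀ u ∈ s, ∀ w ∈ s, ¬ S.Adj (some u) (some w)) ↔
        ∀ u ∈ s, ∀ w ∈ s, ¬ sigmaAdj G u w := by
    intro s
    constructor
    · intro h u hu w hw hadj
      rcases eq_or_ne u w with rfl | hne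
      · exact sirr u hadj
      · exact h u hu w hw ((adj_some u w).mpr ⟨hne, Or.inl hadj⟩)
    · intro h u hu w hw hadj
      obtain ⟨hne, hd | hd⟩ := (adj_some u w).mp hadj
      · exact h u hu w hw hd
      · exact h w hw u hu hd
  -- the two key computations
  have key_univ : fsum S.Adj {x : Option (Σ i, V i) | x ≠ none} = ∏ i, n i := by
    rw [fsum_map_emb Function.Embedding.some S.Adj
        {x : Σ i, V i | x.2 ∈ (Set.univ : Set (V x.1))} {x | x ≠ none}
        (fun a => by simp) (fun x hx => by
          obtain ⟨a, rfl⟩ := Option.ne_none_iff_exists'.mp hx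
          exact ⟨a, rfl⟩)]
    simp only [Function.Embedding.some_apply]
    rw [fsum_congr_rel _ pair_iff, sigma_fsum G (fun i => (Set.univ : Set (V i)))]
    refine Finset.prod_congr rfl fun i _ => ?_
    rw [← fgraph_eq_fsum, hn]
  have key_del : fsum S.Adj
      {x : Option (Σ i, V i) | ∃ a : Σ i, V i, x = some a ∧ a.2 ≠ v a.1} = ∏ i, m i := by
    rw [fsum_map_emb Function.Embedding.some S.Adj
        {x : Σ i, V i | x.2 ∈ ({u | u ≠ v x.1} : Set (V x.1))} _
        (fun a => by
          simp only [Function.Embedding.some_apply, Set.mem_setOf_eq]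
          constructor
          · rintro ⟨b, hb, hbv⟩
            cases Option.some_injective _ hb
            exact hbv
          · intro h
            exact ⟨a, rfl, h⟩)
        (fun x hx => by
          obtain ⟨a, rfl, -⟩ := hx
          exact ⟨a, rfl⟩)]
    simp only [Function.Embedding.some_apply]
    rw [fsum_congr_rel _ pair_iff, sigma_fsum G (fun i => ({u | u ≠ v i} : Set (V i)))]
    refine Finset.prod_congr rfl fun i _ => ?_
    rw [← fdel_eq_fsum, hm]
  -- second component
  have part2 : fdel S {x | x ≠ none} = ∏ i, n i := by
    rw [fdel_eq_fsum]
    exact key_univ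
  refine ⟨?_, part2⟩
  -- first component
  rw [fgraph_eq_fsum, fsum_split S.Adj none (S.irrefl) (fun x y h => h.symm)]
  have hset : {x : Option (Σ i, V i) | x ≠ none ∧ ¬ S.Adj x none}
      = {x | ∃ a : Σ i, V i, x = some a ∧ a.2 ≠ v a.1} := by
    ext x
    cases x with
    | none => simp
    | some a =>
      simp only [Set.mem_setOf_eq, ne_eq, reduceCtorEq, not_false_eq_true, true_and,
        Option.some.injEq]
      rw [adj_none a]
      constructor
      · intro h
        exact ⟨a, rfl, h⟩
      · rintro ⟨b, rfl, hb⟩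
        exact hb
  rw [hset, key_univ, key_del]
end

section
/- In the simple building S = S(G_1^{v_1}, ..., G_k^{v_k}), for each j, f(S - v_j) = m_j · ∏_{i≠j} n_i − ∏_{i=1}^k m_i. -/
open Finset

section Aux

variable {ι : Type*} {V : ι → Type*} (G : ∀ i, SimpleGraph (V i)) (v : ∀ i, V i)

lemma sigmaAdj_same {i : ι} {a b : V i} :
    sigmaAdj G ⟨i, a⟩ ⟨i, b⟩ ↔ (G i).Adj a b := by
  constructor
  · rintro ⟨h, ha⟩
    rwa [Subsingleton.elim h rfl] at ha
  · exact fun h => ⟨rfl, h⟩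

lemma sigmaAdj_fst {a b : Σ i, V i} (h : sigmaAdj G a b) : b.1 = a.1 := by
  obtain ⟨i, x⟩ := a; obtain ⟨i', y⟩ := b
  obtain ⟨h, -⟩ := h; exact h

lemma sb_adj_some_same {i : ι} {x y : V i} :
    (simpleBuilding G v).Adj (some ⟨i, x⟩) (some ⟨i, y⟩) ↔ (G i).Adj x y := by
  rw [simpleBuilding, SimpleGraph.fromRel_adj]
  constructor
  · rintro ⟨-, h | h⟩
    · exact (sigmaAdj_same G).mp h
    · exact ((sigmaAdj_same G).mp h).symm
  · intro h
    refine ⟨?_, Or.inl ((sigmaAdj_same G).mpr h)⟩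
    simp [Sigma.mk.inj_iff, (G i).ne_of_adj h]

lemma sb_not_adj_diff {i i' : ι} (hne : i ≠ i') {x : V i} {y : V i'} :
    ¬ (simpleBuilding G v).Adj (some ⟨i, x⟩) (some ⟨i', y⟩) := by
  rw [simpleBuilding, SimpleGraph.fromRel_adj]
  rintro ⟨-, h | h⟩
  · exact hne (sigmaAdj_fst G h).symm
  · exact hne (sigmaAdj_fst G h)

lemma sb_adj_some_none {a : Σ i, V i} :
    (simpleBuilding G v).Adj (some a) none ↔ a.2 = v a.1 := by
  rw [simpleBuilding, SimpleGraph.fromRel_adj]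
  simp

end Aux

open Classical in
lemma fdel_eq_sum {W : Type*} [Fintype W] (G : SimpleGraph W) (p : W → Prop) :
    fdel G {x | p x} =
      ∑ s ∈ Finset.univ.filter (fun s : Finset W =>
          (∀ x ∈ s, p x) ∧ ∀ u ∈ s, ∀ w ∈ s, ¬ G.Adj u w), (-1 : ℤ) ^ s.card := by
  classical
  unfold fdel fgraph
  refine Finset.sum_nbij'
    (i := fun s : Finset {x // x ∈ {x | p x}} => s.map (Function.Embedding.subtype _))
    (j := fun s => s.subtype (· ∈ {x | p x})) ?_ ?_ ?_ ?_ ?_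
  · intro s hs
    simp only [mem_filter, mem_univ, true_and] at hs ⊢
    constructor
    · intro x hx
      simp only [mem_map, Function.Embedding.coe_subtype] at hx
      obtain ⟨a, -, rfl⟩ := hx
      exact a.2
    · intro u hu w hw hadj
      simp only [mem_map, Function.Embedding.coe_subtype] at hu hw
      obtain ⟨a, ha, rfl⟩ := hu
      obtain ⟨b, hb, rfl⟩ := hw
      exact hs a ha b hb (by simpa using hadj)
  · intro s hs
    simp only [mem_filter, mem_univ, true_and] at hs ⊢
    intro u hu w hw hadj
    simp only [mem_subtype] at hu hw
    exact hs.2 u hu w hw (by simpa using hadj)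
  · intro s _
    ext a
    simp only [mem_subtype, mem_map, Function.Embedding.coe_subtype]
    constructor
    · rintro ⟨b, hb, h⟩
      rwa [← Subtype.ext h]
    · intro h
      exact ⟨a, h, rfl⟩
  · intro s hs
    simp only [mem_filter, mem_univ, true_and] at hs
    exact Finset.subtype_map_of_mem hs.1
  · intro s _
    simp

open Classical in
lemma sigma_sum_eq_prod {ι : Type*} [Fintype ι] {V : ι → Type*} [∀ i, Fintype (V i)]
    (Q : ∀ i, Finset (V i) → Prop) :
    ∑ s ∈ Finset.univ.filter (fun s : Finset (Σ i, V i) =>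
        ∀ i, Q i (Finset.univ.filter (fun a => (⟨i, a⟩ : Σ i, V i) ∈ s))),
      (-1 : ℤ) ^ s.card
    = ∏ i, ∑ t ∈ Finset.univ.filter (Q i), (-1 : ℤ) ^ t.card := by
  classical
  rw [Finset.prod_univ_sum]
  refine Finset.sum_nbij'
    (i := fun s : Finset (Σ i, V i) =>
      fun i => Finset.univ.filter (fun a => (⟨i, a⟩ : Σ i, V i) ∈ s))
    (j := fun x => Finset.univ.sigma x) ?_ ?_ ?_ ?_ ?_
  · intro s hs
    simp only [mem_filter, mem_univ, true_and] at hs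
    simp only [Fintype.mem_piFinset, mem_filter, mem_univ, true_and]
    exact hs
  · intro x hx
    simp only [Fintype.mem_piFinset, mem_filter, mem_univ, true_and] at hx
    simp only [mem_filter, mem_univ, true_and]
    intro i
    convert hx i using 2
    ext a
    simp [Finset.mem_sigma]
  · intro s _
    ext ⟨i, a⟩
    simp [Finset.mem_sigma]
  · intro x _
    funext i
    ext a
    simp [Finset.mem_sigma]
  · intro s _
    rw [Finset.prod_pow_eq_pow_sum]
    congr 1
    have hrec : s = Finset.univ.sigma
        (fun i => Finset.univ.filter (fun a => (⟨i, a⟩ : Σ i, V i) ∈ s)) := by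
      ext ⟨i, a⟩
      simp [Finset.mem_sigma]
    conv_lhs => rw [hrec]
    rw [Finset.card_sigma]


lemma sum_of_seteq {α β : Type*} [AddCommMonoid β] {s t : Finset α}
    (h : ∀ a, a ∈ s ↔ a ∈ t) (f : α → β) : ∑ x ∈ s, f x = ∑ x ∈ t, f x :=
  Finset.sum_congr (Finset.ext h) fun _ _ => rfl

lemma sum_filter_iff {α β : Type*} [AddCommMonoid β] (s : Finset α) {p q : α → Prop}
    [DecidablePred p] [DecidablePred q] (h : ∀ a, p a ↔ q a) (f : α → β) :
    ∑ x ∈ s.filter p, f x = ∑ x ∈ s.filter q, f x := by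
  apply Finset.sum_congr ?_ (fun _ _ => rfl)
  ext a
  simp [Finset.mem_filter, h a]

set_option maxHeartbeats 1000000 in
open Classical in
theorem simpleBuilding_erase_vj {ι : Type*} [Fintype ι] {V : ι → Type*} [∀ i, Fintype (V i)]
    (G : ∀ i, SimpleGraph (V i)) (v : ∀ i, V i) (n m : ι → ℤ)
    (hn : ∀ i, fgraph (G i) = n i) (hm : ∀ i, fdel (G i) {u | u ≠ v i} = m i) (j : ι) :
    fdel (simpleBuilding G v) {x | x ≠ some ⟨j, v j⟩} =
      m j * (∏ i ∈ Finset.univ.erase j, n i) - ∏ i, m i := by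
  classical
  -- the two per-component factor computations (robust in the choice of the filtered set)
  have factor_m : ∀ i (F : Finset (Finset (V i))),
      (∀ t, t ∈ F ↔ ((∀ x ∈ t, x ≠ v i) ∧ ∀ u ∈ t, ∀ w ∈ t, ¬ (G i).Adj u w)) →
      (∑ t ∈ F, (-1 : ℤ) ^ t.card) = m i := by
    intro i F hF
    rw [← hm i, fdel_eq_sum (G i) (fun u => u ≠ v i)]
    apply Finset.sum_congr ?_ (fun _ _ => rfl)
    ext t
    simp [hF t, Finset.mem_filter]
  have factor_mj : ∀ (F : Finset (Finset (V j))),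
      (∀ t, t ∈ F ↔ ((∀ a ∈ t, (⟨j, a⟩ : Σ i, V i) ≠ ⟨j, v j⟩) ∧
        ∀ u ∈ t, ∀ w ∈ t, ¬ (G j).Adj u w)) →
      (∑ t ∈ F, (-1 : ℤ) ^ t.card) = m j := by
    intro F hF
    rw [← hm j, fdel_eq_sum (G j) (fun u => u ≠ v j)]
    apply Finset.sum_congr ?_ (fun _ _ => rfl)
    ext t
    simp only [hF t, Finset.mem_filter, Finset.mem_univ, true_and]
    constructor <;> rintro ⟨h1, h2⟩ <;> refine ⟨?_, h2⟩ <;> intro a ha he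
    · exact h1 a ha (by rw [he])
    · exact h1 a ha (sigma_mk_injective he)
  have factor_n : ∀ i, i ≠ j → ∀ (F : Finset (Finset (V i))),
      (∀ t, t ∈ F ↔ ((∀ a ∈ t, (⟨i, a⟩ : Σ i, V i) ≠ ⟨j, v j⟩) ∧
        ∀ u ∈ t, ∀ w ∈ t, ¬ (G i).Adj u w)) →
      (∑ t ∈ F, (-1 : ℤ) ^ t.card) = n i := by
    intro i hij F hF
    rw [← hn i]
    unfold fgraph
    apply Finset.sum_congr ?_ (fun _ _ => rfl)
    ext t
    simp only [hF t, Finset.mem_filter, Finset.mem_univ, true_and]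
    constructor
    · rintro ⟨-, h⟩; exact h
    · intro h
      exact ⟨fun a _ he => hij (congrArg Sigma.fst he), h⟩
  -- rewrite the LHS as a sum over independent finsets of the Option type avoiding `some ⟨j, v j⟩`
  rw [fdel_eq_sum (simpleBuilding G v) (fun x => x ≠ some ⟨j, v j⟩)]
  rw [← Finset.sum_filter_add_sum_filter_not _
    (fun s => (none : Option (Σ i, V i)) ∈ s) _]
  -- Branch B : sets containing the central vertex
  have hB : (∑ s ∈ (Finset.univ.filter (fun s : Finset (Option (Σ i, V i)) =>
        (∀ x ∈ s, x ≠ some ⟨j, v j⟩) ∧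
        ∀ u ∈ s, ∀ w ∈ s, ¬ (simpleBuilding G v).Adj u w)).filter
        (fun s => (none : Option (Σ i, V i)) ∈ s), (-1 : ℤ) ^ s.card)
      = - ∏ i, m i := by
    have step : (∑ s ∈ (Finset.univ.filter (fun s : Finset (Option (Σ i, V i)) =>
          (∀ x ∈ s, x ≠ some ⟨j, v j⟩) ∧
          ∀ u ∈ s, ∀ w ∈ s, ¬ (simpleBuilding G v).Adj u w)).filter
          (fun s => (none : Option (Σ i, V i)) ∈ s), (-1 : ℤ) ^ s.card)
        = ∑ t ∈ Finset.univ.filter (fun t : Finset (Σ i, V i) =>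
            ∀ i, (∀ x ∈ Finset.univ.filter (fun a => (⟨i, a⟩ : Σ i, V i) ∈ t), x ≠ v i) ∧
              ∀ u ∈ Finset.univ.filter (fun a => (⟨i, a⟩ : Σ i, V i) ∈ t),
                ∀ w ∈ Finset.univ.filter (fun a => (⟨i, a⟩ : Σ i, V i) ∈ t),
                  ¬ (G i).Adj u w),
            (-(-1 : ℤ) ^ t.card) := by
      refine Finset.sum_nbij' (i := fun s => Finset.eraseNone s)
        (j := fun t => Finset.insertNone t) ?_ ?_ ?_ ?_ ?_
      · intro s hs
        simp only [mem_filter, mem_univ, true_and] at hs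
        obtain ⟨⟨h1, h2⟩, h0⟩ := hs
        simp only [mem_filter, mem_univ, true_and, Finset.mem_eraseNone]
        intro i
        constructor
        · intro a ha hav
          exact h2 _ ha _ h0 ((sb_adj_some_none G v).mpr hav)
        · intro u hu w hw hadj
          exact h2 _ hu _ hw ((sb_adj_some_same G v).mpr hadj)
      · intro t ht
        simp only [mem_filter, mem_univ, true_and, Finset.mem_eraseNone] at ht
        have hne : ∀ a : (Σ i, V i), a ∈ t → a.2 ≠ v a.1 := by
          rintro ⟨i, x⟩ hx
          exact (ht i).1 x hx
        simp only [mem_filter, mem_univ, true_and]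
        refine ⟨⟨?_, ?_⟩, Finset.none_mem_insertNone⟩
        · intro x hx he
          rw [he] at hx
          rw [Finset.some_mem_insertNone] at hx
          exact hne _ hx rfl
        · intro u hu w hw
          match u, w with
          | none, none => exact (simpleBuilding G v).irrefl
          | none, some a =>
            intro h
            rw [Finset.some_mem_insertNone] at hw
            exact hne a hw ((sb_adj_some_none G v).mp h.symm)
          | some a, none =>
            intro h
            rw [Finset.some_mem_insertNone] at hu
            exact hne a hu ((sb_adj_some_none G v).mp h)
          | some ⟨ia, xa⟩, some ⟨ib, xb⟩ =>
            rw [Finset.some_mem_insertNone] at hu hw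
            by_cases hii : ia = ib
            · subst hii
              intro h
              exact (ht ia).2 xa hu xb hw ((sb_adj_some_same G v).mp h)
            · exact sb_not_adj_diff G v hii
      · intro s hs
        simp only [mem_filter] at hs
        ext x
        match x with
        | none => simpa using hs.2
        | some a => simp
      · intro t _
        exact Finset.eraseNone_insertNone t
      · intro s hs
        simp only [mem_filter] at hs
        have hrec : Finset.insertNone (Finset.eraseNone s) = s := by
          ext x
          match x with
          | none => simpa using hs.2
          | some a => simp
        have hcard : s.card = (Finset.eraseNone s).card + 1 := by
          conv_lhs => rw [← hrec]
          rw [Finset.card_insertNone]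
        rw [hcard, pow_succ]
        ring
    rw [step, Finset.sum_neg_distrib, neg_inj]
    refine Eq.trans ?_ ((sigma_sum_eq_prod
        (fun i t => (∀ x ∈ t, x ≠ v i) ∧ ∀ u ∈ t, ∀ w ∈ t, ¬ (G i).Adj u w)).trans ?_)
    · exact sum_of_seteq (fun a => by simp only [Finset.mem_filter]) _
    · exact Finset.prod_congr rfl
        (fun i _ => factor_m i _ (fun t => by simp [Finset.mem_filter]))
  -- Branch A : sets avoiding the central vertex
  have hA : (∑ s ∈ (Finset.univ.filter (fun s : Finset (Option (Σ i, V i)) =>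
        (∀ x ∈ s, x ≠ some ⟨j, v j⟩) ∧
        ∀ u ∈ s, ∀ w ∈ s, ¬ (simpleBuilding G v).Adj u w)).filter
        (fun s => ¬ (none : Option (Σ i, V i)) ∈ s), (-1 : ℤ) ^ s.card)
      = m j * ∏ i ∈ Finset.univ.erase j, n i := by
    have step : (∑ s ∈ (Finset.univ.filter (fun s : Finset (Option (Σ i, V i)) =>
          (∀ x ∈ s, x ≠ some ⟨j, v j⟩) ∧
          ∀ u ∈ s, ∀ w ∈ s, ¬ (simpleBuilding G v).Adj u w)).filter
          (fun s => ¬ (none : Option (Σ i, V i)) ∈ s), (-1 : ℤ) ^ s.card)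
        = ∑ t ∈ Finset.univ.filter (fun t : Finset (Σ i, V i) =>
            ∀ i, (∀ a ∈ Finset.univ.filter (fun a => (⟨i, a⟩ : Σ i, V i) ∈ t),
                (⟨i, a⟩ : Σ i, V i) ≠ ⟨j, v j⟩) ∧
              ∀ u ∈ Finset.univ.filter (fun a => (⟨i, a⟩ : Σ i, V i) ∈ t),
                ∀ w ∈ Finset.univ.filter (fun a => (⟨i, a⟩ : Σ i, V i) ∈ t),
                  ¬ (G i).Adj u w),
            (-1 : ℤ) ^ t.card := by
      refine Finset.sum_nbij' (i := fun s => Finset.eraseNone s)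
        (j := fun t => t.map Function.Embedding.some) ?_ ?_ ?_ ?_ ?_
      · intro s hs
        simp only [mem_filter, mem_univ, true_and] at hs
        obtain ⟨⟨h1, h2⟩, h0⟩ := hs
        simp only [mem_filter, mem_univ, true_and, Finset.mem_eraseNone]
        intro i
        constructor
        · intro a ha he
          exact h1 _ ha (by rw [he])
        · intro u hu w hw hadj
          exact h2 _ hu _ hw ((sb_adj_some_same G v).mpr hadj)
      · intro t ht
        simp only [mem_filter, mem_univ, true_and, Finset.mem_eraseNone] at ht
        simp only [mem_filter, mem_univ, true_and]
        refine ⟨⟨?_, ?_⟩, ?_⟩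
        · intro x hx
          simp only [mem_map, Function.Embedding.some_apply] at hx
          obtain ⟨a, ha, rfl⟩ := hx
          intro he
          have ha' : a = ⟨j, v j⟩ := Option.some_injective _ he
          subst ha'
          exact (ht j).1 (v j) ha rfl
        · intro u hu w hw
          simp only [mem_map, Function.Embedding.some_apply] at hu hw
          obtain ⟨a, ha, rfl⟩ := hu
          obtain ⟨b, hb, rfl⟩ := hw
          obtain ⟨ia, xa⟩ := a
          obtain ⟨ib, xb⟩ := b
          by_cases hii : ia = ib
          · subst hii
            intro h
            exact (ht ia).2 xa ha xb hb ((sb_adj_some_same G v).mp h)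
          · exact sb_not_adj_diff G v hii
        · simp
      · intro s hs
        simp only [mem_filter] at hs
        ext x
        match x with
        | none =>
          simp only [mem_map, Function.Embedding.some_apply]
          constructor
          · rintro ⟨a, -, h⟩
            exact absurd h (by simp)
          · intro h
            exact absurd h hs.2
        | some a => simp
      · intro t _
        exact Finset.eraseNone_map_some t
      · intro s hs
        simp only [mem_filter] at hs
        have hrec : (Finset.eraseNone s).map Function.Embedding.some = s := by
          ext x
          match x with
          | none =>
            simp only [mem_map, Function.Embedding.some_apply]
            constructor
            · rintro ⟨a, -, h⟩
              exact absurd h (by simp)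
            · intro h
              exact absurd h hs.2
          | some a => simp
        conv_lhs => rw [← hrec]
        rw [Finset.card_map]
    rw [step]
    refine Eq.trans ?_ ((sigma_sum_eq_prod
        (fun i t => (∀ a ∈ t, (⟨i, a⟩ : Σ i, V i) ≠ ⟨j, v j⟩) ∧
          ∀ u ∈ t, ∀ w ∈ t, ¬ (G i).Adj u w)).trans ?_)
    · exact sum_of_seteq (fun a => by simp only [Finset.mem_filter]) _
    · rw [← Finset.mul_prod_erase Finset.univ _ (Finset.mem_univ j)]
      congr 1
      · exact factor_mj _ (fun t => by simp [Finset.mem_filter])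
      · exact Finset.prod_congr rfl (fun i hi =>
          factor_n i (Finset.ne_of_mem_erase hi) _ (fun t => by simp [Finset.mem_filter]))
  refine Eq.trans (congrArg₂ (· + ·)
    ((sum_of_seteq (fun a => by simp only [Finset.mem_filter]) _).trans hB)
    ((sum_of_seteq (fun a => by simp only [Finset.mem_filter]) _).trans hA)) ?_
  ring
end

section
/- In the complicated building C = C(G_1^{v_1}, ..., G_k^{v_k}), for each j, f(C - v_j) = −m_j · ∏_{i≠j} n_i, and f(C - w_j) = n_j · ∏_{i≠j} (n_i − m_i) − ∏_{i=1}^k n_i. -/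
/-!
Write `F(A)` for the alternating count `∑ (-1)^|s|` over the independent subsets `s` of a vertex
set `A`, so that `f(G) = F(V(G))`. Splitting the independent sets of `A ∪ {a}` by whether they
contain `a` gives `F(A ∪ {a}) = F(A) - F(A ∖ N(a))`. So `F` vanishes as soon as `A` contains an
isolated vertex, and, by induction on one side, `F` is multiplicative over vertex sets with no
edges between them. Deleting `v_j` or `w_j` from the complicated building and expanding at the centre `w`, both
`C - x - w` and `C - x - N[w]` fall apart into the branches `G_i + w_i` (resp. the `G_i`), each
with `x` removed, which turns `f(C - x)` into a difference of two products. After deleting `v_j`,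
the vertex `w_j` is isolated in its branch, so the first product is `0`.
-/

open Finset

namespace SimpleGraph

variable {V W : Type*} (G : SimpleGraph V)

theorem isIndepSet_insert_iff {a : V} {s : Set V} (ha : a ∉ s) :
    G.IsIndepSet (insert a s) ↔ G.IsIndepSet s ∧ ∀ b ∈ s, ¬ G.Adj a b := by
  rw [IsIndepSet, Set.pairwise_insert_of_notMem ha]
  simp only [G.adj_comm _ a, and_self]

variable [DecidableEq V] [DecidableRel G.Adj]

def indepAltSum (A : Finset V) : ℤ :=
  ∑ s ∈ A.powerset.filter (fun s : Finset V => G.IsIndepSet ↑s), (-1) ^ s.card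

@[simp]
theorem indepAltSum_empty : G.indepAltSum ∅ = 1 := by
  simp [indepAltSum, filter_singleton]

theorem indepAltSum_insert {a : V} {A : Finset V} (ha : a ∉ A) :
    G.indepAltSum (insert a A) =
      G.indepAltSum A - G.indepAltSum (A.filter (¬ G.Adj a ·)) := by
  have hsub : (A.filter (¬ G.Adj a ·)).powerset ⊆ A.powerset :=
    powerset_mono.2 (filter_subset _ _)
  have hterm : ∀ t ∈ A.powerset,
      (if G.IsIndepSet ↑(insert a t) then (-1 : ℤ) ^ (insert a t).card else 0) =
        if t ∈ (A.filter (¬ G.Adj a ·)).powerset then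
          -(if G.IsIndepSet ↑t then (-1 : ℤ) ^ t.card else 0) else 0 := by
    intro t ht
    rw [mem_powerset] at ht
    have hat : a ∉ t := fun h => ha (ht h)
    have hsub_iff : t ⊆ A.filter (¬ G.Adj a ·) ↔ ∀ b ∈ t, ¬ G.Adj a b := by
      simp only [subset_iff, mem_filter]
      exact ⟨fun h b hb => (h hb).2, fun h b hb => ⟨ht hb, h b hb⟩⟩
    have hind : G.IsIndepSet (insert a (t : Set V)) ↔
        G.IsIndepSet ↑t ∧ ∀ b ∈ t, ¬ G.Adj a b :=
      G.isIndepSet_insert_iff (by simpa)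
    rw [card_insert_of_notMem hat, pow_succ]
    by_cases h₁ : G.IsIndepSet ↑t <;> by_cases h₂ : ∀ b ∈ t, ¬ G.Adj a b <;>
      simp [hind, hsub_iff, h₁, h₂]
  simp only [indepAltSum, sum_filter]
  rw [sum_powerset_insert ha, sum_congr rfl hterm, sum_ite_mem, inter_eq_right.2 hsub,
    sum_neg_distrib, sub_eq_add_neg]

theorem indepAltSum_insert_of_forall_not_adj {a : V} {A : Finset V} (ha : a ∉ A)
    (hadj : ∀ b ∈ A, ¬ G.Adj a b) : G.indepAltSum (insert a A) = 0 := by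
  rw [G.indepAltSum_insert ha, filter_true_of_mem hadj, sub_self]

theorem indepAltSum_erase {a : V} {A : Finset V} (ha : a ∈ A) :
    G.indepAltSum A =
      G.indepAltSum (A.erase a) - G.indepAltSum ((A.erase a).filter (¬ G.Adj a ·)) := by
  rw [← G.indepAltSum_insert (notMem_erase a A), insert_erase ha]

theorem indepAltSum_union {A B : Finset V} (hAB : Disjoint A B)
    (hadj : ∀ a ∈ A, ∀ b ∈ B, ¬ G.Adj a b) :
    G.indepAltSum (A ∪ B) = G.indepAltSum A * G.indepAltSum B := by
  induction B using Finset.strongInduction with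
  | H B ih =>
  rcases B.eq_empty_or_nonempty with rfl | ⟨b, hb⟩
  · simp
  set B' := B.erase b
  have hB' : B' ⊂ B := erase_ssubset hb
  have hfilter : B'.filter (¬ G.Adj b ·) ⊂ B := (filter_subset _ _).trans_ssubset hB'
  have hbA : b ∉ A := disjoint_right.1 hAB hb
  have hAfilter : A.filter (¬ G.Adj b ·) = A :=
    filter_true_of_mem fun a ha => fun h => hadj a ha b hb h.symm
  rw [← insert_erase hb, union_insert, G.indepAltSum_insert (by simp [hbA]),
    G.indepAltSum_insert (notMem_erase b B), filter_union, hAfilter,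
    ih B' hB' (disjoint_of_subset_right hB'.subset hAB)
      (fun a ha c hc => hadj a ha c (hB'.subset hc)),
    ih _ hfilter (disjoint_of_subset_right hfilter.subset hAB)
      (fun a ha c hc => hadj a ha c (hfilter.subset hc)), mul_sub]

theorem indepAltSum_eq_prod {ι : Type*} [DecidableEq ι] (π : V → ι) (I : Finset ι)
    {A : Finset V} (hA : ∀ a ∈ A, π a ∈ I) (hadj : ∀ a ∈ A, ∀ b ∈ A, G.Adj a b → π a = π b) :
    G.indepAltSum A = ∏ i ∈ I, G.indepAltSum (A.filter (π · = i)) := by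
  induction I using Finset.induction_on generalizing A with
  | empty =>
    obtain rfl : A = ∅ := eq_empty_of_forall_notMem fun a ha => by simpa using hA a ha
    simp
  | insert i I hi ih =>
    have hrest : ∀ i' ∈ I, (A.filter (π · ≠ i)).filter (π · = i') = A.filter (π · = i') :=
      fun i' hi' => by
        rw [filter_filter]
        exact filter_congr fun a _ => ⟨And.right, fun h => ⟨h ▸ ne_of_mem_of_not_mem hi' hi, h⟩⟩
    have hsplit : G.indepAltSum A = G.indepAltSum (A.filter (π · = i)) *
        G.indepAltSum (A.filter (π · ≠ i)) := by
      rw [← G.indepAltSum_union (disjoint_filter_filter_not A A _), filter_union_filter_not_eq]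
      intro a ha b hb h
      rw [mem_filter] at ha hb
      exact hb.2 (ha.2 ▸ (hadj a ha.1 b hb.1 h).symm)
    have hrestA : G.indepAltSum (A.filter (π · ≠ i)) =
        ∏ i' ∈ I, G.indepAltSum (A.filter (π · = i')) := by
      rw [ih, prod_congr rfl fun i' hi' => by rw [hrest i' hi']]
      · intro a ha
        rw [mem_filter] at ha
        exact (mem_insert.1 (hA a ha.1)).resolve_left ha.2
      · intro a ha b hb
        exact hadj a (mem_filter.1 ha).1 b (mem_filter.1 hb).1
    rw [prod_insert hi, hsplit, hrestA]

theorem indepAltSum_map [DecidableEq W] {H : SimpleGraph W} [DecidableRel H.Adj] (φ : G ↪g H)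
    (A : Finset V) :
    H.indepAltSum (A.map φ.toEmbedding) = G.indepAltSum A := by
  simp only [indepAltSum]
  rw [map_eq_image, powerset_image, filter_image,
    sum_image fun s _ t _ h => image_injective φ.toEmbedding.injective h]
  refine sum_congr (filter_congr fun s _ => ?_) fun s _ => ?_
  · rw [coe_image, IsIndepSet, φ.toEmbedding.injective.injOn.pairwise_image]
    unfold Function.onFun
    simp only [RelEmbedding.coe_toEmbedding, φ.map_adj_iff]
  · rw [card_image_of_injective _ φ.toEmbedding.injective]

end SimpleGraph

theorem fgraph_eq_indepAltSum {V : Type*} [Fintype V] [DecidableEq V] (G : SimpleGraph V)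
    [DecidableRel G.Adj] : fgraph G = G.indepAltSum univ := by
  unfold fgraph SimpleGraph.indepAltSum
  rw [powerset_univ]
  refine sum_congr ?_ fun _ _ => rfl
  ext s
  simp only [mem_filter, mem_univ, true_and]
  exact ⟨fun h u hu v hv _ => h u hu v hv, fun h u hu v hv huv =>
    (h hu hv (G.ne_of_adj huv)) huv⟩

theorem fdel_setOf_ne {V : Type*} [Fintype V] [DecidableEq V] (G : SimpleGraph V)
    [DecidableRel G.Adj] (x : V) : fdel G {y | y ≠ x} = G.indepAltSum (univ.erase x) := by
  classical
  have h := fgraph_eq_indepAltSum (G.induce {y | y ≠ x})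
  rw [← (G.induce _).indepAltSum_map (SimpleGraph.Embedding.induce _)] at h
  convert h using 2
  · unfold fdel
    exact congrArg (@fgraph _ · _) (Subsingleton.elim _ _)
  · ext y
    simp

section ComplBuilding

variable {ι : Type*} {V : ι → Type*} (G : ∀ i, SimpleGraph (V i)) (v : ∀ i, V i)

def complBuildingBranch : Option ((Σ i, V i) ⊕ ι) → Option ι :=
  Option.map (Sum.elim Sigma.fst id)

@[simp]
theorem complBuilding_adj_inl_inl {i : ι} {a b : V i} :
    (complBuilding G v).Adj (some (.inl ⟨i, a⟩)) (some (.inl ⟨i, b⟩)) ↔ (G i).Adj a b := by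
  simp only [complBuilding, sigmaAdj, SimpleGraph.fromRel_adj, exists_const]
  exact ⟨fun h => h.2.elim id (G i).adj_symm, fun h => ⟨by simpa using h.ne, .inl h⟩⟩

@[simp]
theorem complBuilding_adj_none_inr (i : ι) :
    (complBuilding G v).Adj none (some (.inr i)) := by
  simp [complBuilding]

@[simp]
theorem complBuilding_not_adj_none_inl (x : Σ i, V i) :
    ¬ (complBuilding G v).Adj none (some (.inl x)) := by
  simp [complBuilding]

@[simp]
theorem complBuilding_adj_inr_inl {i : ι} {x : Σ i, V i} :
    (complBuilding G v).Adj (some (.inr i)) (some (.inl x)) ↔ x = ⟨i, v i⟩ := by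
  obtain ⟨i', a⟩ := x
  simp only [complBuilding, SimpleGraph.fromRel_adj]
  constructor
  · rintro ⟨-, h | ⟨rfl, rfl⟩⟩
    · exact h.elim
    · rfl
  · rintro ⟨⟩
    simp

theorem complBuildingBranch_eq_of_adj {x y : (Σ i, V i) ⊕ ι}
    (h : (complBuilding G v).Adj (some x) (some y)) :
    complBuildingBranch (some x) = complBuildingBranch (some y) := by
  rcases x with ⟨i, a⟩ | i <;> rcases y with ⟨i', b⟩ | i' <;>
    simp only [complBuilding, SimpleGraph.fromRel_adj, sigmaAdj, or_false, false_or,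
      and_false] at h <;>
    simp only [complBuildingBranch, Option.map_some, Sum.elim_inl, Sum.elim_inr, id,
      Option.some.injEq]
  · obtain ⟨-, ⟨rfl, -⟩ | ⟨rfl, -⟩⟩ := h <;> rfl
  · exact h.2.1
  · exact h.2.1.symm

def complBuildingEmbedding (i : ι) : G i ↪g complBuilding G v where
  toFun a := some (.inl ⟨i, a⟩)
  inj' a b h := by simpa using h
  map_rel_iff' := complBuilding_adj_inl_inl G v

@[simp]
theorem complBuildingEmbedding_apply (i : ι) (a : V i) :
    complBuildingEmbedding G v i a = some (.inl ⟨i, a⟩) :=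
  rfl

open Classical

variable [∀ i, Fintype (V i)]

theorem complBuilding_indepAltSum_copy (i : ι) :
    (complBuilding G v).indepAltSum (univ.map (complBuildingEmbedding G v i).toEmbedding) =
      fgraph (G i) := by
  rw [SimpleGraph.indepAltSum_map, fgraph_eq_indepAltSum]

theorem complBuilding_indepAltSum_copy_erase (i : ι) :
    (complBuilding G v).indepAltSum
        ((univ.map (complBuildingEmbedding G v i).toEmbedding).erase (some (.inl ⟨i, v i⟩))) =
      fdel (G i) {u | u ≠ v i} := by
  rw [← complBuildingEmbedding_apply G v i (v i), ← RelEmbedding.coe_toEmbedding, ← map_erase,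
    SimpleGraph.indepAltSum_map, fdel_setOf_ne]

theorem complBuilding_copy_filter_not_adj (i : ι) :
    (univ.map (complBuildingEmbedding G v i).toEmbedding).filter
        (¬ (complBuilding G v).Adj (some (.inr i)) ·) =
      (univ.map (complBuildingEmbedding G v i).toEmbedding).erase (some (.inl ⟨i, v i⟩)) := by
  ext y
  simp only [mem_filter, mem_erase, mem_map, mem_univ, true_and,
    RelEmbedding.coe_toEmbedding, complBuildingEmbedding_apply]
  rw [and_comm (a := ¬y = _)]
  refine and_congr_right ?_
  rintro ⟨a, rfl⟩
  simp

variable [Fintype ι]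

/-- Expansion at the centre `w`: the two products run over the branches `G_i + w_i` and over the
copies of `G_i`, each with `x` removed. -/
theorem fdel_complBuilding_ne {x : Option ((Σ i, V i) ⊕ ι)} (hx : x ≠ none) :
    fdel (complBuilding G v) {y | y ≠ x} =
      ∏ i, (complBuilding G v).indepAltSum
        ((univ.filter (complBuildingBranch · = some i)).erase x) -
      ∏ i, (complBuilding G v).indepAltSum
        ((univ.map (complBuildingEmbedding G v i).toEmbedding).erase x) := by
  have hbranches : ∀ S : Finset (Option ((Σ i, V i) ⊕ ι)), none ∉ S →
      (complBuilding G v).indepAltSum S =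
        ∏ i, (complBuilding G v).indepAltSum (S.filter (complBuildingBranch · = some i)) := by
    intro S hS
    rw [(complBuilding G v).indepAltSum_eq_prod complBuildingBranch univ (fun _ _ => mem_univ _),
      Fintype.prod_option,
      filter_false_of_mem (p := (complBuildingBranch · = none))
        fun y hy h => hS (Option.map_eq_none_iff.1 h ▸ hy),
      SimpleGraph.indepAltSum_empty, one_mul]
    rintro (_ | a) ha (_ | b) hb
    exacts [absurd ha hS, absurd ha hS, absurd hb hS, complBuildingBranch_eq_of_adj G v]
  have hwC : none ∈ univ.erase x := mem_erase.2 ⟨hx.symm, mem_univ _⟩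
  rw [fdel_setOf_ne, (complBuilding G v).indepAltSum_erase hwC,
    hbranches _ (notMem_erase _ _), hbranches _ fun h => notMem_erase _ _ (mem_filter.1 h).1]
  congr 1 <;> refine prod_congr rfl fun i _ => congr_arg _ ?_ <;> ext y
  · rcases y with _ | ⟨i', a⟩ | i' <;> simp [complBuildingBranch]
  · rcases y with _ | ⟨i', a⟩ | i'
    · simp
    · by_cases h : i' = i
      · subst h
        simp [complBuildingBranch]
      · simp [complBuildingBranch, h, Ne.symm h]
    · simp

theorem complBuilding_branch_eq_insert (i : ι) :
    univ.filter (complBuildingBranch · = some i) =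
      insert (some (.inr i)) (univ.map (complBuildingEmbedding G v i).toEmbedding) := by
  ext y
  rcases y with _ | ⟨i', a⟩ | i'
  · simp [complBuildingBranch]
  · by_cases h : i' = i
    · subst h
      simp [complBuildingBranch]
    · simp [complBuildingBranch, h, Ne.symm h]
  · simp [complBuildingBranch]

theorem complBuilding_indepAltSum_branch (i : ι) :
    (complBuilding G v).indepAltSum (univ.filter (complBuildingBranch · = some i)) =
      fgraph (G i) - fdel (G i) {u | u ≠ v i} := by
  rw [complBuilding_branch_eq_insert, SimpleGraph.indepAltSum_insert _ (by simp),
    complBuilding_copy_filter_not_adj, complBuilding_indepAltSum_copy,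
    complBuilding_indepAltSum_copy_erase]

theorem fdel_complBuilding_ne_inl (j : ι) :
    fdel (complBuilding G v) {x | x ≠ some (.inl ⟨j, v j⟩)} =
      -fdel (G j) {u | u ≠ v j} * ∏ i ∈ univ.erase j, fgraph (G i) := by
  have hisolated : (complBuilding G v).indepAltSum
      ((univ.filter (complBuildingBranch · = some j)).erase (some (.inl ⟨j, v j⟩))) = 0 := by
    rw [complBuilding_branch_eq_insert, erase_insert_of_ne (by simp),
      SimpleGraph.indepAltSum_insert_of_forall_not_adj _ (by simp)]
    intro b hb
    rw [← complBuilding_copy_filter_not_adj] at hb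
    exact (mem_filter.1 hb).2
  rw [fdel_complBuilding_ne G v (Option.some_ne_none _), prod_eq_zero (mem_univ j) hisolated,
    zero_sub, ← mul_prod_erase univ _ (mem_univ j), complBuilding_indepAltSum_copy_erase,
    neg_mul]
  congr 2
  refine prod_congr rfl fun i hi => ?_
  rw [erase_eq_of_notMem, complBuilding_indepAltSum_copy]
  simp only [mem_map, RelEmbedding.coe_toEmbedding, complBuildingEmbedding_apply]
  rintro ⟨a, -, h⟩
  exact ne_of_mem_erase hi (Option.some_injective _ (congrArg complBuildingBranch h))

theorem fdel_complBuilding_ne_inr (j : ι) :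
    fdel (complBuilding G v) {x | x ≠ some (.inr j)} =
      fgraph (G j) * ∏ i ∈ univ.erase j, (fgraph (G i) - fdel (G i) {u | u ≠ v i}) -
        ∏ i, fgraph (G i) := by
  have hcopy : ∀ i, some (.inr j) ∉ univ.map (complBuildingEmbedding G v i).toEmbedding := by
    simp
  rw [fdel_complBuilding_ne G v (Option.some_ne_none _), ← mul_prod_erase univ _ (mem_univ j)]
  congr 1
  · congr 1
    · rw [complBuilding_branch_eq_insert, erase_insert (hcopy j), complBuilding_indepAltSum_copy]
    · refine prod_congr rfl fun i hi => ?_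
      rw [erase_eq_of_notMem, complBuilding_indepAltSum_branch]
      simp [complBuildingBranch, (ne_of_mem_erase hi).symm]
  · refine prod_congr rfl fun i _ => ?_
    rw [erase_eq_of_notMem (hcopy i), complBuilding_indepAltSum_copy]

end ComplBuilding

open Classical in
theorem complBuilding_erase {ι : Type*} [Fintype ι] {V : ι → Type*} [∀ i, Fintype (V i)]
    (G : ∀ i, SimpleGraph (V i)) (v : ∀ i, V i) (n m : ι → ℤ)
    (hn : ∀ i, fgraph (G i) = n i) (hm : ∀ i, fdel (G i) {u | u ≠ v i} = m i) (j : ι) :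
    fdel (complBuilding G v) {x | x ≠ some (Sum.inl ⟨j, v j⟩)} =
      - m j * (∏ i ∈ Finset.univ.erase j, n i) ∧
    fdel (complBuilding G v) {x | x ≠ some (Sum.inr j)} =
      n j * (∏ i ∈ Finset.univ.erase j, (n i - m i)) - ∏ i, n i := by
  rw [fdel_complBuilding_ne_inl, fdel_complBuilding_ne_inr]
  simp only [hn, hm, and_self]
end
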